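/- arXiv:2308.06988 — 6 statements merged into one kernel-verified Lean document; each statement's English description precedes it below -/
import Mathlib

section
/- For all real β > 0, κ > 0 and angles θᵢ, θⱼ with cos θᵢ cos θⱼ ≥ 0 and sin θᵢ sin θⱼ ≥ 0, one has exp(-4βκ sin θᵢ sin θⱼ) + exp(-4βκ cos θᵢ cos θⱼ) ≥ exp(-2βκ cos(θᵢ-θⱼ)) · (1 + exp(-2βκ cos(θᵢ-θⱼ))). -/
open Real

-- `2ab ≤ a² + b²`, and `(ab)² ≤ ab` because `0 ≤ ab ≤ 1`.
lemma mul_mul_one_add_le_sq_add_sq {R : Type*} [CommRing R] [LinearOrder R] [IsStrictOrderedRing R]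
    {a b : R} (h₀ : 0 ≤ a * b) (h₁ : a * b ≤ 1) : a * b * (1 + a * b) ≤ a ^ 2 + b ^ 2 := by
  nlinarith [two_mul_le_add_sq a b]

lemma exp_neg_add_mul_one_add_le (s u : ℝ) (h : 0 ≤ s + u) :
    exp (-(s + u)) * (1 + exp (-(s + u))) ≤ exp (-(2 * s)) + exp (-(2 * u)) := by
  have hsq (x : ℝ) : exp (-(2 * x)) = exp (-x) ^ 2 := by rw [sq, ← exp_add]; congr 1; ring
  have hprod : exp (-(s + u)) = exp (-s) * exp (-u) := by rw [neg_add, exp_add]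
  rw [hsq, hsq, hprod]
  exact mul_mul_one_add_le_sq_add_sq (by positivity) (hprod ▸ exp_le_one_iff.mpr (by linarith))

/-- Key edge-probability inequality `p_e^τ ≥ p_e^σ` for the critical U(1)×ℤ₂
cluster representation. -/
theorem stmt1 (β κ θi θj : ℝ) (hβ : 0 < β) (hκ : 0 < κ)
    (hX : 0 ≤ Real.cos θi * Real.cos θj) (hY : 0 ≤ Real.sin θi * Real.sin θj) :
    Real.exp (-(4 * β * κ * (Real.sin θi * Real.sin θj)))
      + Real.exp (-(4 * β * κ * (Real.cos θi * Real.cos θj)))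
      ≥ Real.exp (-(2 * β * κ * Real.cos (θi - θj)))
        * (1 + Real.exp (-(2 * β * κ * Real.cos (θi - θj)))) := by
  have hfour (x : ℝ) : 4 * β * κ * x = 2 * (2 * β * κ * x) := by ring
  have hcos : 2 * β * κ * cos (θi - θj)
      = 2 * β * κ * (sin θi * sin θj) + 2 * β * κ * (cos θi * cos θj) := by
    rw [cos_sub]; ring
  rw [hfour, hfour, hcos]
  refine exp_neg_add_mul_one_add_le _ _ ?_
  rw [← mul_add]
  exact mul_nonneg (by positivity) (add_nonneg hY hX)
end

section
/- Let w, w^ξ, w^η, w^{ξη} be positive reals with the property that w^{ξη} < w^ξ ⟺ w^η < w. Define F(w, w^ξ, w^η, w^{ξη}) = (w - w^η)·1{w^η < w < w^ξ} + (w^ξ - w^{ξη})·1{w^ξ < w and w^η < w}. Then F is invariant under the swap (w, w^ξ, w^η, w^{ξη}) ↦ (w^ξ, w, w^{ξη}, w^η). -/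
open scoped Classical

theorem stmt9_general (w wξ wη wξη : ℝ) (hiff : wξη < wξ ↔ wη < w) :
    let F : ℝ → ℝ → ℝ → ℝ → ℝ := fun a aξ aη aξη =>
      (a - aη) * (if aη < a ∧ a < aξ then 1 else 0)
        + (aξ - aξη) * (if aξ < a ∧ aη < a then 1 else 0)
    F w wξ wη wξη = F wξ w wξη wη := by
  -- Given `hiff`, the swap just exchanges the two summands of `F`.
  have first_term : (wη < w ∧ w < wξ) ↔ (w < wξ ∧ wξη < wξ) := by rw [hiff, and_comm]
  have second_term : (wξ < w ∧ wη < w) ↔ (wξη < wξ ∧ wξ < w) := by rw [hiff, and_comm]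
  simp only [first_term, second_term]
  ring

/-- Invariance of the quantity w(p^η - p^σ) under the spin-flip swap
(w, w^ξ, w^η, w^{ξη}) ↦ (w^ξ, w, w^{ξη}, w^η). -/
theorem stmt9 (w wξ wη wξη : ℝ) (hw : 0 < w) (h1 : 0 < wξ) (h2 : 0 < wη)
    (h3 : 0 < wξη) (hiff : wξη < wξ ↔ wη < w) :
    let F : ℝ → ℝ → ℝ → ℝ → ℝ := fun a aξ aη aξη =>
      (a - aη) * (if aη < a ∧ a < aξ then 1 else 0)
        + (aξ - aξη) * (if aξ < a ∧ aη < a then 1 else 0)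
    F w wξ wη wξη = F wξ w wξη wη :=
  stmt9_general w wξ wη wξη hiff
end

section
/- For Ising spins τ ∈ {-1,+1}^V on a finite graph G = (V,E) and n : E → ℕ, one has Σ_{τ ∈ {-1,1}^V} Π_{e=ij∈E} (1 + τᵢτⱼ)^{n_e} = 2^{|V|} · 2^{(Σ_e n_e) - |V| + C(n̂)} = 2^{Σ_e n_e + C(n̂)}, where C(n̂) is the number of components of the trace subgraph. -/
open scoped Classical

/-- Expansion identity: Σ_τ Π_{e=ij} (1 + τᵢτⱼ)^{n_e} = 2^{Σ n_e + C(n̂)}. -/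
theorem stmt13 {V E : Type*} [Fintype V] [DecidableEq V] [Fintype E]
    (s t : E → V) (n : E → ℕ) :
    (∑ τ : V → Bool, ∏ e : E,
        (1 + (if τ (s e) then (1 : ℤ) else -1) * (if τ (t e) then 1 else -1)) ^ n e)
      = 2 ^ ((∑ e : E, n e) +
          Nat.card (SimpleGraph.fromRel (fun i j => ∃ e, 0 < n e ∧
            ((s e = i ∧ t e = j) ∨ (s e = j ∧ t e = i)))).ConnectedComponent) := by
  set G := SimpleGraph.fromRel (fun i j => ∃ e, 0 < n e ∧
      ((s e = i ∧ t e = j) ∨ (s e = j ∧ t e = i))) with hG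
  set P : (V → Bool) → Prop := fun τ => ∀ e, 0 < n e → τ (s e) = τ (t e) with hP
  have hterm : ∀ τ : V → Bool, (∏ e : E,
      (1 + (if τ (s e) then (1 : ℤ) else -1) * (if τ (t e) then 1 else -1)) ^ n e)
      = if P τ then 2 ^ (∑ e, n e) else 0 := by
    intro τ
    by_cases h : P τ
    · rw [if_pos h, ← Finset.prod_pow_eq_pow_sum]
      refine Finset.prod_congr rfl fun e _ => ?_
      rcases Nat.eq_zero_or_pos (n e) with h0 | h0
      · simp [h0]
      · have := h e h0
        rw [this]
        rcases Bool.eq_false_or_eq_true (τ (t e)) with hb | hb <;> simp [hb]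
    · rw [if_neg h]
      simp only [hP, not_forall, Classical.not_imp] at h
      obtain ⟨e, he, hne⟩ := h
      refine Finset.prod_eq_zero (Finset.mem_univ e) ?_
      have : (1 + (if τ (s e) then (1 : ℤ) else -1) * (if τ (t e) then 1 else -1)) = 0 := by
        rcases Bool.eq_false_or_eq_true (τ (s e)) with hb | hb <;>
          rcases Bool.eq_false_or_eq_true (τ (t e)) with hb' | hb' <;>
          simp_all
      rw [this]
      exact zero_pow (by omega)
  have hwalk : ∀ (τ : V → Bool), P τ → ∀ v w : V, G.Reachable v w → τ v = τ w := by
    intro τ hτ v w hvw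
    obtain ⟨p⟩ := hvw
    induction p with
    | nil => rfl
    | cons h p ih =>
        rename_i a b c
        have hab : τ a = τ b := by
          rw [hG] at h
          obtain ⟨hne, hrel⟩ := h
          rcases hrel with ⟨e, he, h1 | h1⟩ | ⟨e, he, h1 | h1⟩ <;>
            obtain ⟨hs, ht⟩ := h1 <;>
            · have := hτ e he; rw [hs, ht] at this; simp [this]
        rw [hab, ih]
  -- equivalence between {τ // P τ} and functions on connected components
  have hequiv : Fintype.card {τ : V → Bool // P τ}
      = Fintype.card (G.ConnectedComponent → Bool) := by
    apply Fintype.card_congr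
    refine ⟨fun τ => SimpleGraph.ConnectedComponent.lift τ.1 ?_,
        fun f => ⟨fun v => f (G.connectedComponentMk v), ?_⟩, ?_, ?_⟩
    · intro v w p _
      exact hwalk τ.1 τ.2 v w ⟨p⟩
    · intro e he
      by_cases hst : s e = t e
      · rw [hst]
      · have hadj : G.Adj (s e) (t e) := by
          rw [hG]
          exact ⟨hst, Or.inl ⟨e, he, Or.inl ⟨rfl, rfl⟩⟩⟩
        exact congrArg f (SimpleGraph.ConnectedComponent.eq.mpr hadj.reachable)
    · intro τ
      ext v
      rfl
    · intro f
      ext ⟨v⟩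
      rfl
  calc (∑ τ : V → Bool, ∏ e : E,
        (1 + (if τ (s e) then (1 : ℤ) else -1) * (if τ (t e) then 1 else -1)) ^ n e)
      = ∑ τ : V → Bool, if P τ then (2 : ℤ) ^ (∑ e, n e) else 0 := by
        exact Finset.sum_congr rfl fun τ _ => hterm τ
    _ = (Finset.univ.filter P).card * 2 ^ (∑ e, n e) := by
        rw [Finset.sum_ite, Finset.sum_const, Finset.sum_const_zero, add_zero, nsmul_eq_mul]
    _ = 2 ^ ((∑ e : E, n e) + Nat.card G.ConnectedComponent) := by
        have h1 : (Finset.univ.filter P).card = Fintype.card {τ : V → Bool // P τ} :=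
          (Fintype.card_subtype P).symm
        rw [h1, hequiv, Fintype.card_fun, Fintype.card_bool, Nat.card_eq_fintype_card,
          pow_add]
        push_cast
        ring
end

section
/- Consider the Hamiltonian H(σ,τ) = -Σ_{e=ij} κ_e (ρ₊ + ρ₋ τᵢτⱼ) σᵢσⱼ on a finite graph G, where σᵢ, τᵢ ∈ {-1,+1}, ρ ∈ [0,1], ρ± = 1 ± ρ, and κ_e ≥ 0. Then the partition function factorizes as Z = Z^{Is}_{βρ₊} · Z^{Is}_{βρ₋}, where Z^{Is}_{β'} is the partition function of the Ising model on G with couplings κ_e at inverse temperature β'. Moreover ⟨σ₀σ_R⟩ = ⟨s₀s_R⟩^{Is}_{βρ₊} and ⟨τ₀τ_R⟩ = ⟨s₀s_R⟩^{Is}_{βρ₊} · ⟨s₀s_R⟩^{Is}_{βρ₋}. -/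
/-!
Since spins square to one, `τᵢτⱼσᵢσⱼ = (σᵢτᵢ)(σⱼτⱼ)`, so `-βH(σ, τ)` is the sum of the Ising
energy of `σ` at `βρ₊` and that of `στ` at `βρ₋`. For fixed `σ` the map `τ ↦ στ` is a bijection,
hence every sum over `(σ, τ)` of a quantity depending on `σ` and `στ` separately splits into a
product of two Ising sums. Finally `τ = σ · (στ)`, so `τ₀τ_R = (σ₀σ_R) ((στ)₀(στ)_R)`.
-/

noncomputable section

/-- Ising spin value of a Boolean configuration entry. -/
def spin (b : Bool) : ℝ := if b then 1 else -1

variable {V E : Type*}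

/-- Partition function of the Ising model with couplings κ at inverse temperature β. -/
def isingZ [Fintype V] [DecidableEq V] [Fintype E]
    (s t : E → V) (κ : E → ℝ) (β : ℝ) : ℝ :=
  ∑ τ : V → Bool, Real.exp (β * ∑ e, κ e * spin (τ (s e)) * spin (τ (t e)))

/-- Spin-spin correlation of the Ising model. -/
def isingCorr [Fintype V] [DecidableEq V] [Fintype E]
    (s t : E → V) (κ : E → ℝ) (β : ℝ) (a b : V) : ℝ :=
  (∑ τ : V → Bool, spin (τ a) * spin (τ b) *
      Real.exp (β * ∑ e, κ e * spin (τ (s e)) * spin (τ (t e)))) / isingZ s t κ β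

/-- Hamiltonian H(σ,τ) = -Σ_e κ_e (ρ₊ + ρ₋ τᵢτⱼ) σᵢσⱼ. -/
def H14 [Fintype E] (s t : E → V) (κ : E → ℝ) (ρ : ℝ) (σ τ : V → Bool) : ℝ :=
  -∑ e, κ e * ((1 + ρ) + (1 - ρ) * spin (τ (s e)) * spin (τ (t e)))
      * spin (σ (s e)) * spin (σ (t e))

/-- Partition function of the coupled ℤ₂×ℤ₂ model. -/
def Z14 [Fintype V] [DecidableEq V] [Fintype E]
    (s t : E → V) (κ : E → ℝ) (ρ β : ℝ) : ℝ :=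
  ∑ στ : (V → Bool) × (V → Bool), Real.exp (-(β * H14 s t κ ρ στ.1 στ.2))

def prodConf (σ τ : V → Bool) : V → Bool := fun v => σ v == τ v

lemma spin_beq (x y : Bool) : spin (x == y) = spin x * spin y := by
  cases x <;> cases y <;> norm_num [spin]

lemma spin_mul_self (x : Bool) : spin x * spin x = 1 := by
  cases x <;> norm_num [spin]

lemma spin_prodConf (σ τ : V → Bool) (v : V) :
    spin (prodConf σ τ v) = spin (σ v) * spin (τ v) :=
  spin_beq _ _

lemma spin_eq_mul_spin_prodConf (σ τ : V → Bool) (v : V) :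
    spin (τ v) = spin (σ v) * spin (prodConf σ τ v) := by
  rw [spin_prodConf, ← mul_assoc, spin_mul_self, one_mul]

lemma prodConf_involutive (σ : V → Bool) : Function.Involutive (prodConf σ) := by
  intro τ
  funext v
  simp only [prodConf]
  cases σ v <;> cases τ v <;> rfl

lemma Fintype.sum_prod_mul_comp_perm {R α β : Type*} [CommSemiring R] [Fintype α] [Fintype β]
    (e : α → Equiv.Perm β) (F : α → R) (G : β → R) :
    ∑ p : α × β, F p.1 * G (e p.1 p.2) = (∑ a, F a) * ∑ b, G b := by
  rw [Fintype.sum_prod_type, Finset.sum_mul]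
  refine Finset.sum_congr rfl fun a _ => ?_
  dsimp only
  rw [← Finset.mul_sum, Equiv.sum_comp]

lemma sum_prod_mul_comp_prodConf [Fintype V] [DecidableEq V] (F G : (V → Bool) → ℝ) :
    ∑ p : (V → Bool) × (V → Bool), F p.1 * G (prodConf p.1 p.2)
      = (∑ σ, F σ) * ∑ τ, G τ :=
  Fintype.sum_prod_mul_comp_perm (fun σ => (prodConf_involutive σ).toPerm) F G

def isingWeight [Fintype E] (s t : E → V) (κ : E → ℝ) (β : ℝ) (σ : V → Bool) : ℝ :=
  Real.exp (β * ∑ e, κ e * spin (σ (s e)) * spin (σ (t e)))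

section Ising

variable [Fintype V] [DecidableEq V] [Fintype E] (s t : E → V) (κ : E → ℝ)

lemma isingZ_eq_sum_isingWeight (β : ℝ) :
    isingZ s t κ β = ∑ σ, isingWeight s t κ β σ :=
  rfl

lemma isingCorr_eq_sum_isingWeight (β : ℝ) (a b : V) :
    isingCorr s t κ β a b
      = (∑ σ, spin (σ a) * spin (σ b) * isingWeight s t κ β σ) / isingZ s t κ β :=
  rfl

lemma isingZ_pos (β : ℝ) : 0 < isingZ s t κ β :=
  Finset.sum_pos (fun _ _ => Real.exp_pos _) Finset.univ_nonempty

end Ising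

section Coupled

variable [Fintype E] (s t : E → V) (κ : E → ℝ) (ρ β : ℝ)

lemma H14_eq (σ τ : V → Bool) :
    H14 s t κ ρ σ τ
      = -((1 + ρ) * ∑ e, κ e * spin (σ (s e)) * spin (σ (t e)))
        - (1 - ρ) * ∑ e, κ e * spin (prodConf σ τ (s e)) * spin (prodConf σ τ (t e)) := by
  simp only [H14, spin_prodConf, Finset.mul_sum, ← Finset.sum_neg_distrib,
    ← Finset.sum_sub_distrib]
  refine Finset.sum_congr rfl fun e _ => ?_
  ring

lemma exp_neg_mul_H14 (σ τ : V → Bool) :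
    Real.exp (-(β * H14 s t κ ρ σ τ))
      = isingWeight s t κ (β * (1 + ρ)) σ * isingWeight s t κ (β * (1 - ρ)) (prodConf σ τ) := by
  rw [isingWeight, isingWeight, ← Real.exp_add, H14_eq]
  ring_nf

variable [Fintype V] [DecidableEq V]

lemma Z14_eq_mul_isingZ :
    Z14 s t κ ρ β = isingZ s t κ (β * (1 + ρ)) * isingZ s t κ (β * (1 - ρ)) := by
  simp only [Z14, exp_neg_mul_H14, isingZ_eq_sum_isingWeight]
  exact sum_prod_mul_comp_prodConf _ _

lemma sum_spin_fst_mul_exp_neg_mul_H14 (a b : V) :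
    ∑ στ : (V → Bool) × (V → Bool), spin (στ.1 a) * spin (στ.1 b) *
        Real.exp (-(β * H14 s t κ ρ στ.1 στ.2))
      = (∑ σ, spin (σ a) * spin (σ b) * isingWeight s t κ (β * (1 + ρ)) σ)
        * isingZ s t κ (β * (1 - ρ)) := by
  simp only [exp_neg_mul_H14, isingZ_eq_sum_isingWeight, ← mul_assoc]
  exact sum_prod_mul_comp_prodConf (fun σ => spin (σ a) * spin (σ b) * isingWeight s t κ _ σ) _

lemma sum_spin_snd_mul_exp_neg_mul_H14 (a b : V) :
    ∑ στ : (V → Bool) × (V → Bool), spin (στ.2 a) * spin (στ.2 b) *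
        Real.exp (-(β * H14 s t κ ρ στ.1 στ.2))
      = (∑ σ, spin (σ a) * spin (σ b) * isingWeight s t κ (β * (1 + ρ)) σ)
        * ∑ τ, spin (τ a) * spin (τ b) * isingWeight s t κ (β * (1 - ρ)) τ := by
  rw [← sum_prod_mul_comp_prodConf (V := V)]
  refine Finset.sum_congr rfl fun στ _ => ?_
  rw [exp_neg_mul_H14, spin_eq_mul_spin_prodConf στ.1 στ.2 a,
    spin_eq_mul_spin_prodConf στ.1 στ.2 b]
  ring

end Coupled

theorem stmt14_general [Fintype V] [DecidableEq V] [Fintype E]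
    (s t : E → V) (κ : E → ℝ)
    (ρ β : ℝ) (a b : V) :
    Z14 s t κ ρ β = isingZ s t κ (β * (1 + ρ)) * isingZ s t κ (β * (1 - ρ)) ∧
    (∑ στ : (V → Bool) × (V → Bool), spin (στ.1 a) * spin (στ.1 b) *
        Real.exp (-(β * H14 s t κ ρ στ.1 στ.2))) / Z14 s t κ ρ β
      = isingCorr s t κ (β * (1 + ρ)) a b ∧
    (∑ στ : (V → Bool) × (V → Bool), spin (στ.2 a) * spin (στ.2 b) *
        Real.exp (-(β * H14 s t κ ρ στ.1 στ.2))) / Z14 s t κ ρ β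
      = isingCorr s t κ (β * (1 + ρ)) a b * isingCorr s t κ (β * (1 - ρ)) a b := by
  have hZ := Z14_eq_mul_isingZ s t κ ρ β
  refine ⟨hZ, ?_, ?_⟩
  · rw [sum_spin_fst_mul_exp_neg_mul_H14, hZ, isingCorr_eq_sum_isingWeight,
      mul_div_mul_right _ _ (isingZ_pos s t κ _).ne']
  · rw [sum_spin_snd_mul_exp_neg_mul_H14, hZ, isingCorr_eq_sum_isingWeight,
      isingCorr_eq_sum_isingWeight, div_mul_div_comm]

/-- The ℤ₂×ℤ₂ model decouples into two Ising models at inverse temperatures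
βρ₊ and βρ₋; partition function and correlations factorize. -/
theorem stmt14 [Fintype V] [DecidableEq V] [Fintype E]
    (s t : E → V) (κ : E → ℝ) (hκ : ∀ e, 0 ≤ κ e)
    (ρ β : ℝ) (hρ0 : 0 ≤ ρ) (hρ1 : ρ ≤ 1) (a b : V) :
    Z14 s t κ ρ β = isingZ s t κ (β * (1 + ρ)) * isingZ s t κ (β * (1 - ρ)) ∧
    (∑ στ : (V → Bool) × (V → Bool), spin (στ.1 a) * spin (στ.1 b) *
        Real.exp (-(β * H14 s t κ ρ στ.1 στ.2))) / Z14 s t κ ρ β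
      = isingCorr s t κ (β * (1 + ρ)) a b ∧
    (∑ στ : (V → Bool) × (V → Bool), spin (στ.2 a) * spin (στ.2 b) *
        Real.exp (-(β * H14 s t κ ρ στ.1 στ.2))) / Z14 s t κ ρ β
      = isingCorr s t κ (β * (1 + ρ)) a b * isingCorr s t κ (β * (1 - ρ)) a b :=
  stmt14_general s t κ ρ β a b

end
end

section
/- In the ℤ₄×ℤ₂ model with Hamiltonian H = -(1/2) Σ_{e=ij} κ_e (ρ₊ + ρ₋ τᵢτⱼ)(ξᵢξⱼ + ηᵢηⱼ) on a finite graph (ξ, η, τ ∈ {-1,+1}^V, κ_e ≥ 0, ρ ∈ [0,1]), one has ⟨τ₀τ_R⟩ = ⟨τ₀τ_R ξ₀ξ_R η₀η_R⟩ for all sites 0, R. -/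
/-!
The gauge transformation `τ ↦ τξη` (sitewise) is an involution of the configuration space that
leaves the Hamiltonian unchanged: on an edge `ij` it multiplies `τᵢτⱼ` by `(ξᵢξⱼ)(ηᵢηⱼ)`, and
`xy(x + y) = x + y` for signs `x, y`. Reindexing the Gibbs sums along it turns the observable
`τ₀τ_R` into `τ₀τ_R ξ₀ξ_R η₀η_R`.
-/

noncomputable section

variable {V E : Type*}

/-- Hamiltonian H = -(1/2) Σ_e κ_e (ρ₊ + ρ₋ τᵢτⱼ)(ξᵢξⱼ + ηᵢηⱼ) of the
ℤ₄×ℤ₂ model written via two Ising fields ξ, η coupled to τ. -/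
def H4 [Fintype E] (s t : E → V) (κ : E → ℝ) (ρ : ℝ) (ξ η τ : V → Bool) : ℝ :=
  -(1 / 2) * ∑ e, κ e * ((1 + ρ) + (1 - ρ) * spin (τ (s e)) * spin (τ (t e)))
      * (spin (ξ (s e)) * spin (ξ (t e)) + spin (η (s e)) * spin (η (t e)))

/-- Gibbs expectation of an observable f(ξ, η, τ) in the ℤ₄×ℤ₂ model. -/
def gibbs4 [Fintype V] [DecidableEq V] [Fintype E]
    (s t : E → V) (κ : E → ℝ) (ρ β : ℝ)
    (f : (V → Bool) → (V → Bool) → (V → Bool) → ℝ) : ℝ :=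
  (∑ c : (V → Bool) × (V → Bool) × (V → Bool),
      f c.1 c.2.1 c.2.2 * Real.exp (-(β * H4 s t κ ρ c.1 c.2.1 c.2.2)))
    / ∑ c : (V → Bool) × (V → Bool) × (V → Bool),
        Real.exp (-(β * H4 s t κ ρ c.1 c.2.1 c.2.2))

theorem mul_mul_add_eq_add_of_sq_eq_one {R : Type*} [CommRing R] {x y : R}
    (hx : x ^ 2 = 1) (hy : y ^ 2 = 1) : x * y * (x + y) = x + y := by
  linear_combination y * hx + x * hy

lemma spin_sq (b : Bool) : spin b ^ 2 = 1 := by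
  cases b <;> norm_num [spin]

/-- The gauge transformation `τ ↦ τξη`, with `==` playing the role of multiplication of signs. -/
def gaugeTransform (ξ η τ : V → Bool) : V → Bool := fun v => τ v == (ξ v == η v)

lemma spin_gaugeTransform (ξ η τ : V → Bool) (v : V) :
    spin (gaugeTransform ξ η τ v) = spin (τ v) * (spin (ξ v) * spin (η v)) := by
  simp only [gaugeTransform, spin_beq]

lemma gaugeTransform_gaugeTransform (ξ η τ : V → Bool) :
    gaugeTransform ξ η (gaugeTransform ξ η τ) = τ := by
  funext v
  simp only [gaugeTransform]
  cases τ v <;> cases ξ v <;> cases η v <;> rfl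

lemma gaugeTransform_involutive :
    Function.Involutive fun c : (V → Bool) × (V → Bool) × (V → Bool) =>
      (c.1, c.2.1, gaugeTransform c.1 c.2.1 c.2.2) :=
  fun c => by simp only [gaugeTransform_gaugeTransform]

lemma H4_gaugeTransform [Fintype E] (s t : E → V) (κ : E → ℝ) (ρ : ℝ) (ξ η τ : V → Bool) :
    H4 s t κ ρ ξ η (gaugeTransform ξ η τ) = H4 s t κ ρ ξ η τ := by
  unfold H4
  congr 1
  refine Finset.sum_congr rfl fun e _ => ?_
  have key := mul_mul_add_eq_add_of_sq_eq_one
    (x := spin (ξ (s e)) * spin (ξ (t e))) (y := spin (η (s e)) * spin (η (t e)))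
    (by rw [mul_pow, spin_sq, spin_sq, one_mul]) (by rw [mul_pow, spin_sq, spin_sq, one_mul])
  simp only [spin_gaugeTransform]
  linear_combination (κ e * (1 - ρ) * spin (τ (s e)) * spin (τ (t e))) * key

theorem gibbs4_comp_gaugeTransform [Fintype V] [DecidableEq V] [Fintype E]
    (s t : E → V) (κ : E → ℝ) (ρ β : ℝ)
    (f : (V → Bool) → (V → Bool) → (V → Bool) → ℝ) :
    gibbs4 s t κ ρ β f = gibbs4 s t κ ρ β (fun ξ η τ => f ξ η (gaugeTransform ξ η τ)) := by
  unfold gibbs4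
  congr 1
  exact Fintype.sum_bijective _ gaugeTransform_involutive.bijective _ _ fun c => by
    simp only [gaugeTransform_gaugeTransform, H4_gaugeTransform]

theorem stmt16_general [Fintype V] [DecidableEq V] [Fintype E]
    (s t : E → V) (κ : E → ℝ)
    (ρ β : ℝ) (a b : V) :
    gibbs4 s t κ ρ β (fun _ξ _η τ => spin (τ a) * spin (τ b))
      = gibbs4 s t κ ρ β (fun ξ η τ => spin (τ a) * spin (τ b)
          * (spin (ξ a) * spin (ξ b)) * (spin (η a) * spin (η b))) := by
  rw [gibbs4_comp_gaugeTransform]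
  simp only [spin_gaugeTransform]
  congr 1
  funext ξ η τ
  ring

/-- Invariance under τ ↦ τξη: ⟨τ₀τ_R⟩ = ⟨τ₀τ_R ξ₀ξ_R η₀η_R⟩. -/
theorem stmt16 [Fintype V] [DecidableEq V] [Fintype E]
    (s t : E → V) (κ : E → ℝ) (hκ : ∀ e, 0 ≤ κ e)
    (ρ β : ℝ) (hρ0 : 0 ≤ ρ) (hρ1 : ρ ≤ 1) (a b : V) :
    gibbs4 s t κ ρ β (fun _ξ _η τ => spin (τ a) * spin (τ b))
      = gibbs4 s t κ ρ β (fun ξ η τ => spin (τ a) * spin (τ b)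
          * (spin (ξ a) * spin (ξ b)) * (spin (η a) * spin (η b))) :=
  stmt16_general s t κ ρ β a b

end
end

section
/- In the ℤ₄×ℤ₂ model with Hamiltonian H = -(1/2) Σ_{e=ij} κ_e (ρ₊ + ρ₋ τᵢτⱼ)(ξᵢξⱼ + ηᵢηⱼ) with κ_e ≥ 0, ρ ∈ [0,1], the conditional Gibbs expectation of ξ₀ξ_R given any fixed τ-configuration is nonnegative, and consequently ⟨τ₀τ_R ξ₀ξ_R⟩ ≤ ⟨ξ₀ξ_R⟩. -/
/-!
For a fixed τ the weight `exp (-β H4)` factorizes into two independent Ising models, one for ξ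
and one for η, with the τ-dependent couplings `β κ_e ((1 + ρ) + (1 - ρ) τᵢτⱼ) / 2`. These are
nonnegative because `τᵢτⱼ = ±1` and `0 ≤ ρ`, so Griffiths' first inequality makes the conditional
correlation `⟨ξ_a ξ_b⟩^τ` nonnegative. Since `τ_a τ_b ≤ 1`, summing over τ gives
`⟨τ_a τ_b ξ_a ξ_b⟩ ≤ ⟨ξ_a ξ_b⟩`.
-/

noncomputable section

variable {V E : Type*}

open Finset

lemma spin_mul_spin (x y : Bool) : spin x * spin y = spin (x == y) := by
  cases x <;> cases y <;> norm_num [spin]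

lemma spin_le_one (x : Bool) : spin x ≤ 1 := by
  cases x <;> norm_num [spin]

lemma sum_spin_pow_nonneg (m : ℕ) : 0 ≤ ∑ x : Bool, spin x ^ m := by
  rcases Nat.even_or_odd m with h | h <;> simp [spin, h.neg_one_pow]

lemma exp_mul_spin (J : ℝ) (x : Bool) :
    Real.exp (J * spin x) = Real.cosh J + Real.sinh J * spin x := by
  cases x
  · simp [spin, ← Real.cosh_sub_sinh, sub_eq_add_neg]
  · simp [spin, ← Real.cosh_add_sinh]

section Griffiths

variable [Fintype V]

def spinMonomial (m : V → ℕ) (ξ : V → Bool) : ℝ := ∏ v, spin (ξ v) ^ m v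

variable [DecidableEq V]

lemma spinMonomial_add_single (m : V → ℕ) (x : V) (ξ : V → Bool) :
    spinMonomial (m + Pi.single x 1) ξ = spinMonomial m ξ * spin (ξ x) := by
  simp only [spinMonomial, Pi.add_apply, pow_add, prod_mul_distrib]
  congr 1
  simp [Pi.single_apply, pow_ite]

lemma spinMonomial_single_add_single (x y : V) (ξ : V → Bool) :
    spinMonomial (Pi.single x 1 + Pi.single y 1) ξ = spin (ξ x) * spin (ξ y) := by
  have h0 : spinMonomial (0 : V → ℕ) ξ = 1 := by simp [spinMonomial]
  rw [spinMonomial_add_single, ← zero_add (Pi.single x 1), spinMonomial_add_single, h0, one_mul]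

lemma sum_spinMonomial_nonneg (m : V → ℕ) : 0 ≤ ∑ ξ : V → Bool, spinMonomial m ξ := by
  simp only [spinMonomial]
  rw [← Fintype.prod_sum (fun v x => spin x ^ m v)]
  exact prod_nonneg fun v _ => sum_spin_pow_nonneg (m v)

/-- Griffiths' first inequality. -/
theorem sum_spinMonomial_mul_exp_nonneg (s t : E → V) (J : E → ℝ) (A : Finset E)
    (hJ : ∀ e ∈ A, 0 ≤ J e) (m : V → ℕ) :
    0 ≤ ∑ ξ : V → Bool, spinMonomial m ξ
        * Real.exp (∑ e ∈ A, J e * (spin (ξ (s e)) * spin (ξ (t e)))) := by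
  classical
  induction A using Finset.induction generalizing m with
  | empty => simpa using sum_spinMonomial_nonneg m
  | @insert e A he ih =>
    have hJA : ∀ e' ∈ A, 0 ≤ J e' := fun e' he' => hJ e' (mem_insert_of_mem he')
    set w : (V → Bool) → ℝ :=
      fun ξ => Real.exp (∑ e' ∈ A, J e' * (spin (ξ (s e')) * spin (ξ (t e'))))
    -- `exp (J σ) = cosh J + sinh J σ` for `σ = ±1` splits the new edge into two monomials.
    have hsplit : ∀ ξ : V → Bool,
        spinMonomial m ξ * Real.exp (∑ e' ∈ insert e A, J e' * (spin (ξ (s e')) * spin (ξ (t e'))))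
          = Real.cosh (J e) * (spinMonomial m ξ * w ξ)
            + Real.sinh (J e) * (spinMonomial (m + Pi.single (s e) 1 + Pi.single (t e) 1) ξ * w ξ) := by
      intro ξ
      rw [sum_insert he, Real.exp_add, spin_mul_spin, exp_mul_spin, ← spin_mul_spin,
        spinMonomial_add_single, spinMonomial_add_single]
      ring
    simp only [hsplit, sum_add_distrib, ← mul_sum]
    exact add_nonneg (mul_nonneg (Real.cosh_pos _).le (ih hJA m))
      (mul_nonneg (Real.sinh_nonneg_iff.mpr (hJ e (mem_insert_self e A))) (ih hJA _))

theorem sum_spin_mul_spin_mul_exp_nonneg [Fintype E] (s t : E → V) (J : E → ℝ)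
    (hJ : ∀ e, 0 ≤ J e) (a b : V) :
    0 ≤ ∑ ξ : V → Bool, spin (ξ a) * spin (ξ b)
        * Real.exp (∑ e, J e * (spin (ξ (s e)) * spin (ξ (t e)))) := by
  have h := sum_spinMonomial_mul_exp_nonneg s t J univ (fun e _ => hJ e)
    (Pi.single a 1 + Pi.single b 1)
  simpa only [spinMonomial_single_add_single] using h

end Griffiths

section Z4Z2

/-- The coupling `β κ'_e` of the ξ- and η-models once τ is fixed. -/
def condCoupling (s t : E → V) (κ : E → ℝ) (ρ β : ℝ) (τ : V → Bool) (e : E) : ℝ :=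
  β / 2 * (κ e * ((1 + ρ) + (1 - ρ) * spin (τ (s e)) * spin (τ (t e))))

lemma condCoupling_nonneg (s t : E → V) (κ : E → ℝ) (hκ : ∀ e, 0 ≤ κ e) {ρ β : ℝ}
    (hρ : 0 ≤ ρ) (hβ : 0 ≤ β) (τ : V → Bool) (e : E) : 0 ≤ condCoupling s t κ ρ β τ e := by
  refine mul_nonneg (by positivity) (mul_nonneg (hκ e) ?_)
  rw [mul_assoc, spin_mul_spin]
  cases τ (s e) == τ (t e)
  · norm_num [spin]
    linarith
  · norm_num [spin]

variable [Fintype E]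

lemma neg_mul_H4 (s t : E → V) (κ : E → ℝ) (ρ β : ℝ) (ξ η τ : V → Bool) :
    -(β * H4 s t κ ρ ξ η τ)
      = ∑ e, condCoupling s t κ ρ β τ e * (spin (ξ (s e)) * spin (ξ (t e)))
        + ∑ e, condCoupling s t κ ρ β τ e * (spin (η (s e)) * spin (η (t e))) := by
  simp only [H4, condCoupling, ← sum_add_distrib, mul_sum, ← sum_neg_distrib]
  exact sum_congr rfl fun e _ => by ring

variable [Fintype V]

theorem sum_spin_mul_spin_mul_exp_H4_nonneg [DecidableEq V] (s t : E → V) (κ : E → ℝ)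
    (hκ : ∀ e, 0 ≤ κ e) {ρ β : ℝ} (hρ : 0 ≤ ρ) (hβ : 0 ≤ β) (a b : V) (τ : V → Bool) :
    0 ≤ ∑ p : (V → Bool) × (V → Bool),
        spin (p.1 a) * spin (p.1 b) * Real.exp (-(β * H4 s t κ ρ p.1 p.2 τ)) := by
  have hfactor : ∑ p : (V → Bool) × (V → Bool),
        spin (p.1 a) * spin (p.1 b) * Real.exp (-(β * H4 s t κ ρ p.1 p.2 τ))
      = (∑ ξ : V → Bool, spin (ξ a) * spin (ξ b)
          * Real.exp (∑ e, condCoupling s t κ ρ β τ e * (spin (ξ (s e)) * spin (ξ (t e)))))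
        * ∑ η : V → Bool,
          Real.exp (∑ e, condCoupling s t κ ρ β τ e * (spin (η (s e)) * spin (η (t e)))) := by
    rw [Fintype.sum_mul_sum, Fintype.sum_prod_type]
    simp only [neg_mul_H4, Real.exp_add, mul_assoc]
  rw [hfactor]
  exact mul_nonneg
    (sum_spin_mul_spin_mul_exp_nonneg s t _ (condCoupling_nonneg s t κ hκ hρ hβ τ) a b)
    (sum_nonneg fun η _ => (Real.exp_pos _).le)

theorem gibbs4_le_gibbs4 [DecidableEq V] (s t : E → V) (κ : E → ℝ) (ρ β : ℝ)
    (f g : (V → Bool) → (V → Bool) → (V → Bool) → ℝ)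
    (hfg : ∀ τ, ∑ p : (V → Bool) × (V → Bool), f p.1 p.2 τ * Real.exp (-(β * H4 s t κ ρ p.1 p.2 τ))
      ≤ ∑ p : (V → Bool) × (V → Bool), g p.1 p.2 τ * Real.exp (-(β * H4 s t κ ρ p.1 p.2 τ))) :
    gibbs4 s t κ ρ β f ≤ gibbs4 s t κ ρ β g := by
  have hsum : ∀ F : (V → Bool) × (V → Bool) × (V → Bool) → ℝ,
      ∑ c, F c = ∑ τ, ∑ p : (V → Bool) × (V → Bool), F (p.1, p.2, τ) := fun F => by
    rw [← Fintype.sum_equiv (Equiv.prodAssoc _ _ _) _ F fun _ => rfl]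
    exact Fintype.sum_prod_type_right' fun (p : (V → Bool) × (V → Bool)) τ => F (p.1, p.2, τ)
  unfold gibbs4
  gcongr ?_ / _
  rw [hsum, hsum]
  exact sum_le_sum fun τ _ => hfg τ

end Z4Z2

theorem stmt17_general [Fintype V] [DecidableEq V] [Fintype E]
    (s t : E → V) (κ : E → ℝ) (hκ : ∀ e, 0 ≤ κ e)
    (ρ β : ℝ) (hρ0 : 0 ≤ ρ) (hβ : 0 ≤ β) (a b : V) :
    (∀ τ : V → Bool,
      0 ≤ (∑ p : (V → Bool) × (V → Bool),
              spin (p.1 a) * spin (p.1 b) * Real.exp (-(β * H4 s t κ ρ p.1 p.2 τ)))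
            / ∑ p : (V → Bool) × (V → Bool),
                Real.exp (-(β * H4 s t κ ρ p.1 p.2 τ))) ∧
    gibbs4 s t κ ρ β (fun ξ _η τ => spin (τ a) * spin (τ b) * (spin (ξ a) * spin (ξ b)))
      ≤ gibbs4 s t κ ρ β (fun ξ _η _τ => spin (ξ a) * spin (ξ b)) := by
  have hcond := sum_spin_mul_spin_mul_exp_H4_nonneg s t κ hκ hρ0 hβ a b
  refine ⟨fun τ => div_nonneg (hcond τ) (sum_nonneg fun _ _ => (Real.exp_pos _).le), ?_⟩
  refine gibbs4_le_gibbs4 s t κ ρ β _ _ fun τ => ?_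
  simp only [spin_mul_spin (τ a), mul_assoc, ← mul_sum]
  exact mul_le_of_le_one_left (by simpa only [mul_assoc] using hcond τ) (spin_le_one _)

/-- Conditional Gibbs expectation of ξ₀ξ_R given any fixed τ-configuration
is nonnegative (Griffiths), and consequently ⟨τ₀τ_R ξ₀ξ_R⟩ ≤ ⟨ξ₀ξ_R⟩. -/
theorem stmt17 [Fintype V] [DecidableEq V] [Fintype E]
    (s t : E → V) (κ : E → ℝ) (hκ : ∀ e, 0 ≤ κ e)
    (ρ β : ℝ) (hρ0 : 0 ≤ ρ) (hρ1 : ρ ≤ 1) (hβ : 0 ≤ β) (a b : V) :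
    (∀ τ : V → Bool,
      0 ≤ (∑ p : (V → Bool) × (V → Bool),
              spin (p.1 a) * spin (p.1 b) * Real.exp (-(β * H4 s t κ ρ p.1 p.2 τ)))
            / ∑ p : (V → Bool) × (V → Bool),
                Real.exp (-(β * H4 s t κ ρ p.1 p.2 τ))) ∧
    gibbs4 s t κ ρ β (fun ξ _η τ => spin (τ a) * spin (τ b) * (spin (ξ a) * spin (ξ b)))
      ≤ gibbs4 s t κ ρ β (fun ξ _η _τ => spin (ξ a) * spin (ξ b)) :=
  stmt17_general s t κ hκ ρ β hρ0 hβ a b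

end
end
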